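/- In the proxy-metric model, the naive (plug-in) expected reward of the decision rule that launches when the observed proxy effect is positive satisfies E[ τ̂_Y | τ̂_S > 0 ] = √(2/π) · ( Λ₁₂ + 2Ω₁₂/M ) / √( Λ₂₂ + 2Ω₂₂/M ); in particular it depends on the sampling-error covariance Ω₁₂ and not only on the true treatment-effect covariance Λ₁₂. -/

import Mathlib

open MeasureTheory ProbabilityTheory Real NNReal ENNReal

/-- A measure `Q` on `ℝ × ℝ` is bivariate Gaussian with mean `(μA, μB)` and covariance
matrix `[[vA, vAB], [vAB, vB]]` iff every linear functional pushes it forward to the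
one-dimensional Gaussian with the corresponding mean and variance (possibly degenerate,
i.e. a Dirac mass, when the variance vanishes). -/
def IsBivariateGaussian (Q : Measure (ℝ × ℝ)) (μA μB vA vAB vB : ℝ) : Prop :=
  ∀ a b : ℝ, Q.map (fun p => a * p.1 + b * p.2) =
    gaussianReal (a * μA + b * μB)
      (Real.toNNReal (a ^ 2 * vA + 2 * a * b * vAB + b ^ 2 * vB))

/-!
Independent bivariate Gaussian pairs add to a bivariate Gaussian pair with the summed
covariance, so `(τ̂_Y, τ̂_S)` is a centred Gaussian pair `(X, Y)` with covariance `Λ + (2/M)Ω`.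
For such a pair with `Var Y = v > 0` and `Cov(X, Y) = c`, the variable `k X + Y` is centred
Gaussian with variance `q k = k² Var X + 2 k c + v`, hence `E[(k X + Y)⁺] = √(q k / (2π))`.
Differentiating at `k = 0` under the integral gives `E[X · 1{Y > 0}] = q'(0) / (2 √(2π v)) =
c / √(2π v)`, and `P(Y > 0) = 1/2` by symmetry.
-/

open Set Filter Topology

lemma quadForm_nonneg_of_sq_le_mul {A B C : ℝ} (hA : 0 ≤ A) (hC : 0 ≤ C) (hB : B ^ 2 ≤ A * C)
    (a b : ℝ) :
    0 ≤ a ^ 2 * A + 2 * a * b * B + b ^ 2 * C := by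
  have hB' : 4 * (a * b) ^ 2 * B ^ 2 ≤ 4 * (a * b) ^ 2 * (A * C) :=
    mul_le_mul_of_nonneg_left hB (by positivity)
  have hsq : (2 * (a * b) * B) ^ 2 ≤ (a ^ 2 * A + b ^ 2 * C) ^ 2 := by
    nlinarith [sq_nonneg (a ^ 2 * A - b ^ 2 * C)]
  nlinarith [hsq, (by positivity : 0 ≤ a ^ 2 * A + b ^ 2 * C)]

lemma integral_Ioi_mul_exp_neg_mul_sq {b : ℝ} (hb : 0 < b) :
    ∫ x in Ioi 0, x * rexp (-b * x ^ 2) = (2 * b)⁻¹ := by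
  have h := integral_mul_cexp_neg_mul_sq (b := b) (by simpa using hb)
  rw [← Complex.ofReal_ofNat, ← Complex.ofReal_mul, ← Complex.ofReal_inv] at h
  refine Complex.ofReal_injective (Eq.trans ?_ h)
  rw [← integral_complex_ofReal]
  push_cast
  rfl

lemma integral_max_zero_gaussianReal (v : ℝ≥0) :
    ∫ x, max x 0 ∂gaussianReal 0 v = √(v / (2 * π)) := by
  rcases eq_or_ne v 0 with rfl | hv
  · simp
  have hv' : (0 : ℝ) < v := by positivity
  have hpdf : ∀ x, gaussianPDFReal 0 v x * max x 0
      = (Ioi 0).indicator (fun x => (√(2 * π * v))⁻¹ * (x * rexp (-(2 * v : ℝ)⁻¹ * x ^ 2))) x := by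
    intro x
    rcases le_or_gt x 0 with hx | hx
    · simp [max_eq_right hx, hx.not_gt]
    · rw [indicator_of_mem (mem_Ioi.mpr hx), max_eq_left hx.le, gaussianPDFReal, sub_zero]
      field_simp
  rw [integral_gaussianReal_eq_integral_smul hv]
  simp_rw [smul_eq_mul, hpdf]
  rw [integral_indicator measurableSet_Ioi, integral_const_mul,
    integral_Ioi_mul_exp_neg_mul_sq (by positivity : (0 : ℝ) < (2 * (v : ℝ))⁻¹),
    Real.sqrt_div' _ (by positivity), Real.sqrt_mul' _ hv'.le]
  field_simp
  rw [Real.sq_sqrt hv'.le]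

lemma gaussianReal_Ioi_zero {v : ℝ≥0} (hv : v ≠ 0) : gaussianReal 0 v (Ioi 0) = 2⁻¹ := by
  have : NullSingletonClass (gaussianReal 0 v) := nullSingletonClass_gaussianReal hv
  have hsymm : gaussianReal 0 v (Iio 0) = gaussianReal 0 v (Ioi 0) := by
    conv_lhs => rw [← neg_zero, ← gaussianReal_map_neg]
    rw [Measure.map_apply measurable_neg measurableSet_Iio]
    congr 1
    ext x
    simp
  have htotal : gaussianReal 0 v (Iio 0) + gaussianReal 0 v (Ioi 0) = 1 := by
    rw [← measure_union Iio_disjoint_Ioi_same measurableSet_Ioi, Iio_union_Ioi,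
      measure_compl (measurableSet_singleton 0) (measure_ne_top _ _), measure_singleton,
      measure_univ, tsub_zero]
  rw [hsymm, ← two_mul, mul_comm] at htotal
  exact ENNReal.eq_inv_of_mul_eq_one_left htotal

lemma hasDerivAt_integral_max_mul_add_zero {α : Type*} [MeasurableSpace α] {μ : Measure α}
    {X Y : α → ℝ} (hX : Integrable X μ) (hY : Integrable Y μ) (hYm : Measurable Y)
    (hY0 : ∀ᵐ a ∂μ, Y a ≠ 0) :
    HasDerivAt (fun k => ∫ a, max (k * X a + Y a) 0 ∂μ) (∫ a in {a | 0 < Y a}, X a ∂μ) 0 := by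
  have hset : MeasurableSet {a | 0 < Y a} := hYm measurableSet_Ioi
  rw [← integral_indicator hset]
  refine (hasDerivAt_integral_of_dominated_loc_of_lip (s := univ) (bound := fun a => |X a|)
    univ_mem (Eventually.of_forall fun k => ?_) ?_ (hX.aestronglyMeasurable.indicator hset)
    (ae_of_all _ fun a => ?_) hX.abs ?_).2
  · exact ((hX.aestronglyMeasurable.const_mul k).add hY.aestronglyMeasurable).sup
      aestronglyMeasurable_const
  · simpa using hY.pos_part
  · refine (LipschitzWith.of_dist_le_mul fun k₁ k₂ => ?_).lipschitzOnWith
    rw [Real.dist_eq, Real.dist_eq]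
    calc |max (k₁ * X a + Y a) 0 - max (k₂ * X a + Y a) 0|
        ≤ |(k₁ * X a + Y a) - (k₂ * X a + Y a)| := abs_max_sub_max_le_abs _ _ _
      _ = |X a| * |k₁ - k₂| := by rw [← abs_mul]; ring_nf
      _ = Real.nnabs |X a| * |k₁ - k₂| := by rw [Real.coe_nnabs, abs_abs]
  · filter_upwards [hY0] with a ha
    have hlin : HasDerivAt (fun k => k * X a + Y a) (X a) 0 :=
      (hasDerivAt_mul_const (X a)).add_const (Y a)
    have htend : Tendsto (fun k => k * X a + Y a) (𝓝 0) (𝓝 (Y a)) := by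
      simpa using hlin.continuousAt.tendsto
    rcases ha.lt_or_gt with hneg | hpos
    · rw [indicator_of_notMem (by simpa using hneg.le)]
      refine (hasDerivAt_const 0 0).congr_of_eventuallyEq ?_
      filter_upwards [htend.eventually_lt_const hneg] with k hk
      exact max_eq_right hk.le
    · rw [indicator_of_mem (by simpa using hpos)]
      refine hlin.congr_of_eventuallyEq ?_
      filter_upwards [htend.eventually_const_lt hpos] with k hk
      exact max_eq_left hk.le

lemma integrable_of_map_eq_gaussianReal {α : Type*} [MeasurableSpace α] {μ : Measure α}
    {X : α → ℝ} {m : ℝ} {v : ℝ≥0} (hXm : AEMeasurable X μ) (hX : μ.map X = gaussianReal m v) :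
    Integrable X μ :=
  (integrable_map_measure aestronglyMeasurable_id hXm).1
    (hX ▸ (memLp_id_gaussianReal 1).integrable le_rfl)

namespace IsBivariateGaussian

variable {Q : Measure (ℝ × ℝ)} {μA μB vA vAB vB : ℝ}

lemma map_mul_fst_add_snd (hQ : IsBivariateGaussian Q μA μB vA vAB vB) (k : ℝ) :
    Q.map (fun p => k * p.1 + p.2) =
      gaussianReal (k * μA + μB) (k ^ 2 * vA + 2 * k * vAB + vB).toNNReal := by
  simpa using hQ k 1

lemma map_fst (hQ : IsBivariateGaussian Q μA μB vA vAB vB) :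
    Q.map Prod.fst = gaussianReal μA vA.toNNReal := by
  simpa using hQ 1 0

lemma map_snd (hQ : IsBivariateGaussian Q μA μB vA vAB vB) :
    Q.map Prod.snd = gaussianReal μB vB.toNNReal := by
  simpa using hQ 0 1

lemma add_of_indepFun {Ω : Type*} [MeasurableSpace Ω] {P : Measure Ω} {U V : Ω → ℝ × ℝ}
    {μA' μB' vA' vAB' vB' : ℝ} (hU : IsBivariateGaussian (P.map U) μA μB vA vAB vB)
    (hV : IsBivariateGaussian (P.map V) μA' μB' vA' vAB' vB') (hUm : Measurable U)
    (hVm : Measurable V) (hUV : IndepFun U V P)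
    (hqU : ∀ a b : ℝ, 0 ≤ a ^ 2 * vA + 2 * a * b * vAB + b ^ 2 * vB)
    (hqV : ∀ a b : ℝ, 0 ≤ a ^ 2 * vA' + 2 * a * b * vAB' + b ^ 2 * vB') :
    IsBivariateGaussian (P.map (U + V)) (μA + μA') (μB + μB') (vA + vA') (vAB + vAB')
      (vB + vB') := by
  intro a b
  set L : ℝ × ℝ → ℝ := fun p => a * p.1 + b * p.2
  have hL : Measurable L := by fun_prop
  have hLU : P.map (L ∘ U) = _ := (Measure.map_map hL hUm).symm.trans (hU a b)
  have hLV : P.map (L ∘ V) = _ := (Measure.map_map hL hVm).symm.trans (hV a b)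
  have hsplit : L ∘ (U + V) = L ∘ U + L ∘ V := by
    ext ω
    simp only [L, Function.comp_apply, Pi.add_apply, Prod.fst_add, Prod.snd_add]
    ring
  rw [Measure.map_map hL (hUm.add hVm), hsplit,
    gaussianReal_add_gaussianReal_of_indepFun (hUV.comp hL hL) hLU hLV,
    ← Real.toNNReal_add (hqU a b) (hqV a b)]
  congr 1
  · ring
  · congr 1; ring

lemma setIntegral_fst_snd_pos (hQ : IsBivariateGaussian Q 0 0 vA vAB vB) (hvB : 0 < vB) :
    ∫ p in {p | 0 < p.2}, p.1 ∂Q = vAB / √(2 * π * vB) := by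
  set q : ℝ → ℝ := fun k => k ^ 2 * vA + 2 * k * vAB + vB
  have hfst : Integrable Prod.fst Q :=
    integrable_of_map_eq_gaussianReal measurable_fst.aemeasurable hQ.map_fst
  have hsnd : Integrable Prod.snd Q :=
    integrable_of_map_eq_gaussianReal measurable_snd.aemeasurable hQ.map_snd
  have hsnd0 : ∀ᵐ p ∂Q, p.2 ≠ 0 := by
    have := nullSingletonClass_gaussianReal (μ := 0) (v := vB.toNNReal) (by simpa using hvB)
    refine ae_of_ae_map (p := (· ≠ 0)) measurable_snd.aemeasurable ?_
    rw [hQ.map_snd]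
    exact Measure.ae_ne _ 0
  have hG : ∀ᶠ k in 𝓝 0, ∫ p, max (k * p.1 + p.2) 0 ∂Q = √(q k / (2 * π)) := by
    have hq : Continuous q := by fun_prop
    filter_upwards [(hq.tendsto 0).eventually_const_lt (by simpa [q] using hvB)] with k hk
    rw [← integral_map (f := fun x : ℝ => max x 0) (by fun_prop) (by fun_prop),
      hQ.map_mul_fst_add_snd k, mul_zero, add_zero, integral_max_zero_gaussianReal,
      Real.coe_toNNReal _ hk.le]
  have hq' : HasDerivAt q (2 * vAB) 0 := by
    simpa [q] using (((hasDerivAt_pow 2 (0 : ℝ)).mul_const vA).add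
      (((hasDerivAt_id (0 : ℝ)).const_mul 2).mul_const vAB)).add_const vB
  have hderiv := (hq'.div_const (2 * π)).sqrt (by simp [q, hvB.ne', Real.pi_ne_zero])
  rw [(hasDerivAt_integral_max_mul_add_zero hfst hsnd measurable_snd hsnd0).unique
    (hderiv.congr_of_eventuallyEq hG)]
  have hπ : 0 < 2 * π := by positivity
  simp only [q, ne_eq, OfNat.ofNat_ne_zero, not_false_eq_true, zero_pow, zero_mul, mul_zero,
    add_zero, zero_add]
  rw [Real.sqrt_div' _ hπ.le, Real.sqrt_mul' _ hvB.le]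
  field_simp
  rw [Real.sq_sqrt hπ.le]
  ring

lemma setIntegral_fst_div_measure_snd_pos (hQ : IsBivariateGaussian Q 0 0 vA vAB vB)
    (hvB : 0 < vB) :
    (∫ p in {p | 0 < p.2}, p.1 ∂Q) / (Q {p | 0 < p.2}).toReal = √(2 / π) * vAB / √vB := by
  have hhalf : Q {p | 0 < p.2} = 2⁻¹ := by
    rw [show {p : ℝ × ℝ | 0 < p.2} = Prod.snd ⁻¹' Ioi 0 from rfl,
      ← Measure.map_apply measurable_snd measurableSet_Ioi, hQ.map_snd,
      gaussianReal_Ioi_zero (by simpa using hvB)]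
  rw [hQ.setIntegral_fst_snd_pos hvB, hhalf, ENNReal.toReal_inv, ENNReal.toReal_ofNat,
    Real.sqrt_div' _ Real.pi_pos.le, Real.sqrt_mul' _ hvB.le, Real.sqrt_mul zero_le_two]
  field_simp
  rw [Real.sq_sqrt zero_le_two]

end IsBivariateGaussian

theorem proxy_model_naive_reward_general
    {Ωs : Type*} [MeasurableSpace Ωs] (P : Measure Ωs)
    (M : ℝ) (hM : 0 < M)
    (Λ11 Λ12 Λ22 Ω11 Ω12 Ω22 : ℝ)
    (hΛ : 0 ≤ Λ11 ∧ 0 ≤ Λ22 ∧ Λ12 ^ 2 ≤ Λ11 * Λ22)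
    (hΩ : 0 ≤ Ω11 ∧ 0 ≤ Ω22 ∧ Ω12 ^ 2 ≤ Ω11 * Ω22)
    (hpos : 0 < Λ22 + 2 / M * Ω22)
    (τY τS εY εS : Ωs → ℝ)
    (hτY : Measurable τY) (hτS : Measurable τS) (hεY : Measurable εY) (hεS : Measurable εS)
    (hτlaw : IsBivariateGaussian (P.map (fun ω => (τY ω, τS ω))) 0 0 Λ11 Λ12 Λ22)
    (hεlaw : IsBivariateGaussian (P.map (fun ω => (εY ω, εS ω))) 0 0
      (2 / M * Ω11) (2 / M * Ω12) (2 / M * Ω22))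
    (hindep : IndepFun (fun ω => (τY ω, τS ω)) (fun ω => (εY ω, εS ω)) P) :
    (∫ ω in {ω | 0 < τS ω + εS ω}, (τY ω + εY ω) ∂P) / (P {ω | 0 < τS ω + εS ω}).toReal =
      Real.sqrt (2 / π) * (Λ12 + 2 * Ω12 / M) / Real.sqrt (Λ22 + 2 * Ω22 / M) := by
  obtain ⟨hΛ11, hΛ22, hΛ12⟩ := hΛ
  obtain ⟨hΩ11, hΩ22, hΩ12⟩ := hΩ
  have hc : 0 ≤ 2 / M := by positivity
  set Z : Ωs → ℝ × ℝ := fun ω => (τY ω + εY ω, τS ω + εS ω)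
  have hZ : Measurable Z := (hτY.add hεY).prodMk (hτS.add hεS)
  have hZlaw : IsBivariateGaussian (P.map Z) 0 0
      (Λ11 + 2 / M * Ω11) (Λ12 + 2 / M * Ω12) (Λ22 + 2 / M * Ω22) := by
    have h := hτlaw.add_of_indepFun hεlaw (hτY.prodMk hτS) (hεY.prodMk hεS) hindep
      (quadForm_nonneg_of_sq_le_mul hΛ11 hΛ22 hΛ12) fun a b => by
        nlinarith [mul_nonneg hc (quadForm_nonneg_of_sq_le_mul hΩ11 hΩ22 hΩ12 a b)]
    rwa [add_zero] at h
  have hS : MeasurableSet {p : ℝ × ℝ | 0 < p.2} := measurable_snd measurableSet_Ioi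
  have hnum : ∫ ω in {ω | 0 < τS ω + εS ω}, (τY ω + εY ω) ∂P
      = ∫ p in {p | 0 < p.2}, p.1 ∂(P.map Z) :=
    (setIntegral_map hS measurable_fst.aestronglyMeasurable hZ.aemeasurable).symm
  have hden : P {ω | 0 < τS ω + εS ω} = P.map Z {p | 0 < p.2} := (Measure.map_apply hZ hS).symm
  rw [hnum, hden, hZlaw.setIntegral_fst_div_measure_snd_pos hpos, div_mul_eq_mul_div,
    div_mul_eq_mul_div]

/-- In the proxy-metric model — `(τ_Y, τ_S)` a centered bivariate Gaussian
vector with covariance `Λ`, independently `(ε_Y, ε_S)` a centered bivariate Gaussian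
vector with covariance `(2/M)Ω`, and estimated effects `τ̂_Y = τ_Y + ε_Y`,
`τ̂_S = τ_S + ε_S` — the naive (plug-in) expected reward of the decision rule that
launches when the observed proxy effect is positive satisfies
`E[τ̂_Y | τ̂_S > 0] = √(2/π) · (Λ₁₂ + 2Ω₁₂/M) / √(Λ₂₂ + 2Ω₂₂/M)`;
in particular it depends on the sampling-error covariance `Ω₁₂` and not only on the
true treatment-effect covariance `Λ₁₂`.  Here `E[A | E] := E[A·1_E]/P(E)`. -/
theorem proxy_model_naive_reward
    {Ωs : Type*} [MeasurableSpace Ωs] (P : Measure Ωs) [IsProbabilityMeasure P]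
    (M : ℝ) (hM : 0 < M)
    (Λ11 Λ12 Λ22 Ω11 Ω12 Ω22 : ℝ)
    (hΛ : 0 ≤ Λ11 ∧ 0 ≤ Λ22 ∧ Λ12 ^ 2 ≤ Λ11 * Λ22)
    (hΩ : 0 ≤ Ω11 ∧ 0 ≤ Ω22 ∧ Ω12 ^ 2 ≤ Ω11 * Ω22)
    (hpos : 0 < Λ22 + 2 / M * Ω22)
    (τY τS εY εS : Ωs → ℝ)
    (hτY : Measurable τY) (hτS : Measurable τS) (hεY : Measurable εY) (hεS : Measurable εS)
    (hτlaw : IsBivariateGaussian (P.map (fun ω => (τY ω, τS ω))) 0 0 Λ11 Λ12 Λ22)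
    (hεlaw : IsBivariateGaussian (P.map (fun ω => (εY ω, εS ω))) 0 0
      (2 / M * Ω11) (2 / M * Ω12) (2 / M * Ω22))
    (hindep : IndepFun (fun ω => (τY ω, τS ω)) (fun ω => (εY ω, εS ω)) P) :
    (∫ ω in {ω | 0 < τS ω + εS ω}, (τY ω + εY ω) ∂P) / (P {ω | 0 < τS ω + εS ω}).toReal =
      Real.sqrt (2 / π) * (Λ12 + 2 * Ω12 / M) / Real.sqrt (Λ22 + 2 * Ω22 / M) :=
  proxy_model_naive_reward_general P M hM Λ11 Λ12 Λ22 Ω11 Ω12 Ω22 hΛ hΩ hpos τY τS εY εS hτY hτS hεY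
    hεS hτlaw hεlaw hindep
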